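/- arXiv:2102.13612 — 2 statements merged into one kernel-verified Lean document; each statement's English description precedes it below -/
import Mathlib

section
/- The inverse hull H(S_T) of a Markov shift is combinatorial: if γ ∈ H(S_T) satisfies γγ* = γ*γ, then γ is idempotent (where γ* denotes the inverse partial bijection). -/
def IsWord {A : Type} (T : A → A → Prop) (w : List A) : Prop := w ≠ [] ∧ w.Chain' T

def PMap (A : Type) := List A → Option (List A)

def pzero {A : Type} : PMap A := fun _ => none

def pcomp {A : Type} (f g : PMap A) : PMap A := fun x => (g x).bind f

open Classical in
noncomputable def pinv {A : Type} (f : PMap A) : PMap A := fun y =>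
  if h : ∃ x, f x = some y then some h.choose else none

open Classical in
noncomputable def theta {A : Type} (T : A → A → Prop) (w : List A) : PMap A := fun x =>
  if IsWord T x ∧ IsWord T (w ++ x) then some (w ++ x) else none

open Classical in
noncomputable def pid {A : Type} (T : A → A → Prop) : PMap A := fun x =>
  if IsWord T x then some x else none

noncomputable def idemL {A : Type} (T : A → A → Prop) (a : A) : PMap A :=
  pcomp (pinv (theta T [a])) (theta T [a])

noncomputable def rgIdem {A : Type} (T : A → A → Prop) (a : A) : PMap A :=
  pcomp (theta T [a]) (pinv (theta T [a]))

noncomputable def prodIdems {A : Type} (T : A → A → Prop) (xs : List A) : PMap A :=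
  (xs.map (idemL T)).foldr pcomp (pid T)

def pdom {A : Type} (f : PMap A) : Set (List A) := {x | f x ≠ none}

inductive Hull {A : Type} (T : A → A → Prop) : PMap A → Prop
  | gen {w : List A} : IsWord T w → Hull T (theta T w)
  | zero : Hull T pzero
  | comp {f g : PMap A} : Hull T f → Hull T g → Hull T (pcomp f g)
  | inv {f : PMap A} : Hull T f → Hull T (pinv f)

open Classical in
noncomputable def smul {A : Type} (T : A → A → Prop) :
    Option (List A) → Option (List A) → Option (List A)
  | some u, some v => if IsWord T (u ++ v) then some (u ++ v) else none
  | _, _ => none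

/-! An element of the inverse hull acts on its domain by replacing a fixed prefix `v` by a fixed
prefix `u`. If its domain equals its range (which is what `γγ* = γ*γ` says), comparing a shortest
word of the domain with its image and with a preimage forces `|u| = |v|`, and then any word of the
domain starts with both `u` and `v`, so `u = v` and `γ` is a restriction of the identity. -/

section

variable {A : Type}

lemma pcomp_eq_some {f g : PMap A} {x z : List A} :
    pcomp f g x = some z ↔ ∃ y, g x = some y ∧ f y = some z :=
  Option.bind_eq_some_iff

lemma eq_some_of_pinv_eq_some {f : PMap A} {x y : List A} (h : pinv f y = some x) :
    f x = some y := by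
  classical
  unfold pinv at h
  split_ifs at h with hy
  exact Option.some.inj h ▸ hy.choose_spec

lemma pinv_ne_none_of_eq_some {f : PMap A} {x y : List A} (h : f x = some y) :
    pinv f y ≠ none := by
  classical
  unfold pinv
  rw [dif_pos ⟨x, h⟩]
  exact Option.some_ne_none _

def prange (f : PMap A) : Set (List A) := {y | ∃ x, f x = some y}

lemma pdom_pcomp_pinv_self (f : PMap A) : pdom (pcomp (pinv f) f) = pdom f := by
  ext x
  simp only [pdom, Set.mem_ofPred_eq, Option.ne_none_iff_exists', pcomp_eq_some]
  constructor
  · rintro ⟨_, y, hy, -⟩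
    exact ⟨y, hy⟩
  · rintro ⟨y, hy⟩
    obtain ⟨x', hx'⟩ := Option.ne_none_iff_exists'.mp (pinv_ne_none_of_eq_some hy)
    exact ⟨x', y, hy, hx'⟩

lemma pdom_pcomp_self_pinv (f : PMap A) : pdom (pcomp f (pinv f)) = prange f := by
  ext y
  simp only [pdom, prange, Set.mem_ofPred_eq, Option.ne_none_iff_exists', pcomp_eq_some]
  constructor
  · rintro ⟨_, x, hx, -⟩
    exact ⟨x, eq_some_of_pinv_eq_some hx⟩
  · rintro ⟨x, hx⟩
    obtain ⟨x', hx'⟩ := Option.ne_none_iff_exists'.mp (pinv_ne_none_of_eq_some hx)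
    exact ⟨y, x', hx', eq_some_of_pinv_eq_some hx'⟩

lemma pcomp_self_of_forall_eq_some_imp_eq {γ : PMap A} (hγ : ∀ x y, γ x = some y → y = x) :
    pcomp γ γ = γ := by
  funext x
  change (γ x).bind γ = γ x
  cases hx : γ x with
  | none => rfl
  | some y => exact (hγ x y hx) ▸ hx

def IsPrefixSwap (u v : List A) (γ : PMap A) : Prop :=
  ∀ x y, γ x = some y → ∃ t, x = v ++ t ∧ y = u ++ t

namespace IsPrefixSwap

variable {u v u₁ v₁ u₂ v₂ r : List A} {f g γ : PMap A}

lemma of_forall_eq_none (u v : List A) (hγ : ∀ x, γ x = none) : IsPrefixSwap u v γ :=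
  fun x y h => by simp [hγ x] at h

lemma theta (T : A → A → Prop) (w : List A) : IsPrefixSwap w [] (theta T w) := by
  intro x y h
  unfold _root_.theta at h
  split_ifs at h
  exact ⟨x, rfl, (Option.some.inj h).symm⟩

lemma pinv (hγ : IsPrefixSwap u v γ) : IsPrefixSwap v u (pinv γ) := by
  intro y x h
  obtain ⟨t, hx, hy⟩ := hγ x y (eq_some_of_pinv_eq_some h)
  exact ⟨t, hy, hx⟩

lemma pcomp_of_eq_append_left (hf : IsPrefixSwap u₁ v₁ f) (hg : IsPrefixSwap (v₁ ++ r) v₂ g) :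
    IsPrefixSwap (u₁ ++ r) v₂ (pcomp f g) := by
  intro x z h
  obtain ⟨y, hxy, hyz⟩ := pcomp_eq_some.mp h
  obtain ⟨t, rfl, rfl⟩ := hg x y hxy
  obtain ⟨s, hs, rfl⟩ := hf _ z hyz
  rw [List.append_assoc] at hs
  exact ⟨t, rfl, by rw [← List.append_cancel_left hs, List.append_assoc]⟩

lemma pcomp_of_eq_append_right (hf : IsPrefixSwap u₁ (u₂ ++ r) f) (hg : IsPrefixSwap u₂ v₂ g) :
    IsPrefixSwap u₁ (v₂ ++ r) (pcomp f g) := by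
  intro x z h
  obtain ⟨y, hxy, hyz⟩ := pcomp_eq_some.mp h
  obtain ⟨t, rfl, rfl⟩ := hg x y hxy
  obtain ⟨s, hs, rfl⟩ := hf _ z hyz
  rw [List.append_assoc] at hs
  exact ⟨s, by rw [List.append_cancel_left hs, List.append_assoc], rfl⟩

lemma exists_pcomp (hf : IsPrefixSwap u₁ v₁ f) (hg : IsPrefixSwap u₂ v₂ g) :
    ∃ u v, IsPrefixSwap u v (pcomp f g) := by
  by_cases hne : ∃ x z, pcomp f g x = some z
  · obtain ⟨x, z, h⟩ := hne
    obtain ⟨y, hxy, hyz⟩ := pcomp_eq_some.mp h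
    obtain ⟨t, -, hy⟩ := hg x y hxy
    obtain ⟨s, hy', -⟩ := hf y z hyz
    -- `y` starts with both `u₂` and `v₁`, so one of them extends the other.
    rcases List.append_eq_append_iff.mp (hy.symm.trans hy') with ⟨r, rfl, -⟩ | ⟨r, rfl, -⟩
    · exact ⟨u₁, v₂ ++ r, pcomp_of_eq_append_right hf hg⟩
    · exact ⟨u₁ ++ r, v₂, pcomp_of_eq_append_left hf hg⟩
  · push Not at hne
    exact ⟨[], [], of_forall_eq_none _ _ fun x => Option.eq_none_iff_forall_ne_some.mpr (hne x)⟩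

lemma length_eq (hγ : IsPrefixSwap u v γ) (hdom : pdom γ = prange γ) (hne : (pdom γ).Nonempty) :
    u.length = v.length := by
  set x₀ := Function.argminOn List.length (pdom γ) hne
  have hmin : ∀ x ∈ pdom γ, x₀.length ≤ x.length := fun x hx =>
    not_lt.mp (Function.not_lt_argminOn _ _ hx)
  have hx₀ : x₀ ∈ pdom γ := Function.argminOn_mem _ _ hne
  obtain ⟨y₀, hy₀⟩ := Option.ne_none_iff_exists'.mp hx₀
  obtain ⟨w, hw⟩ : x₀ ∈ prange γ := hdom ▸ hx₀
  have hy₀_dom : y₀ ∈ pdom γ := hdom ▸ ⟨x₀, hy₀⟩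
  have hw_dom : w ∈ pdom γ := by simp [pdom, hw]
  obtain ⟨t, hx₀t, hy₀t⟩ := hγ x₀ y₀ hy₀
  obtain ⟨s, hws, hx₀s⟩ := hγ w x₀ hw
  have h₁ := hmin y₀ hy₀_dom
  have h₂ := hmin w hw_dom
  rw [hy₀t, hx₀t] at h₁
  rw [hws, hx₀s] at h₂
  simp only [List.length_append] at h₁ h₂
  omega

lemma eq_of_apply_eq_some (hγ : IsPrefixSwap u v γ) (hdom : pdom γ = prange γ) {x y : List A}
    (hxy : γ x = some y) : y = x := by
  have hlen := hγ.length_eq hdom ⟨x, by simp [pdom, hxy]⟩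
  obtain ⟨t, rfl, rfl⟩ := hγ x y hxy
  obtain ⟨z, hz⟩ := Option.ne_none_iff_exists'.mp (show u ++ t ∈ pdom γ from hdom ▸ ⟨_, hxy⟩)
  obtain ⟨s, hs, -⟩ := hγ _ z hz
  rw [(List.append_inj hs hlen).1]

end IsPrefixSwap

lemma Hull.exists_isPrefixSwap {T : A → A → Prop} {γ : PMap A} (hγ : Hull T γ) :
    ∃ u v, IsPrefixSwap u v γ := by
  induction hγ with
  | @gen w _ => exact ⟨w, [], .theta T w⟩
  | zero => exact ⟨[], [], .of_forall_eq_none _ _ fun _ => rfl⟩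
  | comp _ _ ihf ihg =>
    obtain ⟨u₁, v₁, hf⟩ := ihf
    obtain ⟨u₂, v₂, hg⟩ := ihg
    exact hf.exists_pcomp hg
  | inv _ ih =>
    obtain ⟨u, v, hf⟩ := ih
    exact ⟨v, u, hf.pinv⟩

end

theorem stmt10_general {A : Type} (T : A → A → Prop)
    (γ : PMap A) (hγ : Hull T γ)
    (h : pcomp γ (pinv γ) = pcomp (pinv γ) γ) :
    pcomp γ γ = γ := by
  obtain ⟨u, v, hswap⟩ := hγ.exists_isPrefixSwap
  have hdom : pdom γ = prange γ := by
    rw [← pdom_pcomp_pinv_self, ← h, pdom_pcomp_self_pinv]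
  exact pcomp_self_of_forall_eq_some_imp_eq fun _ _ => hswap.eq_of_apply_eq_some hdom

/-- The inverse hull of a Markov shift is combinatorial. -/
theorem stmt10 {A : Type} [Fintype A] (T : A → A → Prop) (hT : ∀ a : A, ∃ b : A, T a b)
    (γ : PMap A) (hγ : Hull T γ)
    (h : pcomp γ (pinv γ) = pcomp (pinv γ) γ) :
    pcomp γ γ = γ :=
  stmt10_general T γ hγ h
end

section
/- For each a ∈ A, θ_a θ_a^{-1} is D-equivalent to θ_a^{-1} θ_a, and θ_a^{-1} θ_a is a nonzero element of O↑ − O; moreover θ_a^{-1}θ_a is the unique element of O↑ − O that is D-equivalent to θ_a θ_a^{-1}. -/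
/-!
Every element of `H(S_T)` is a prefix swap `v ++ x ↦ u ++ x`, defined on the words `x` whose
first letter lies in a set `H` of letters that may follow both `u` and `v` (zero is the case
`H = ∅`): the generators `θ_w` are of this form, and the form is stable under inversion and
composition. So if `γγ⁻¹ = θ_aθ_a⁻¹`, then `γ` swaps `[a]` with some `v` over the followers
of `a`, and `γ⁻¹γ` is the identity on the words `v ++ x` with `T a x₀`. If moreover
`θ_bθ_b⁻¹ ≤ γ⁻¹γ`, evaluating at a word `[b, x]` forces `v = []`, which gives `θ_a⁻¹θ_a`,
or `v = [b]`, in which case the sets of followers of `a` and `b` coincide and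
`γ⁻¹γ = θ_bθ_b⁻¹`.
-/

section PrefixSwap

variable {A : Type} {T : A → A → Prop}

def CanFollow (T : A → A → Prop) (u : List A) (b : A) : Prop := (u ++ [b]).IsChain T

theorem isWord_singleton (a : A) : IsWord T [a] := ⟨List.cons_ne_nil a [], .singleton a⟩

theorem canFollow_singleton {a b : A} : CanFollow T [a] b ↔ T a b := List.isChain_pair

theorem isWord_append_cons {u l : List A} {b : A} :
    IsWord T (u ++ b :: l) ↔ IsWord T (b :: l) ∧ CanFollow T u b := by
  change (_ ≠ [] ∧ List.IsChain T _) ↔ (_ ≠ [] ∧ List.IsChain T _) ∧ _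
  rw [List.isChain_split]
  simp only [ne_eq, List.append_eq_nil_iff, reduceCtorEq, and_false, not_false_eq_true, true_and]
  exact and_comm

theorem CanFollow.append_cons {u m : List A} {b c : A} (hc : CanFollow T u c)
    (hb : CanFollow T (c :: m) b) : CanFollow T (u ++ c :: m) b := by
  rw [CanFollow, List.append_assoc, List.cons_append, List.isChain_split]
  exact ⟨hc, hb⟩

open Classical in
noncomputable def prefixSwap (T : A → A → Prop) (u v : List A) (H : A → Prop) : PMap A :=
  fun x => if ∃ b l, x = v ++ b :: l ∧ IsWord T (b :: l) ∧ H b then some (u ++ x.drop v.length)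
    else none

theorem prefixSwap_eq_some_iff {u v x y : List A} {H : A → Prop} :
    prefixSwap T u v H x = some y ↔
      ∃ b l, x = v ++ b :: l ∧ IsWord T (b :: l) ∧ H b ∧ y = u ++ b :: l := by
  unfold prefixSwap
  split_ifs with h
  · obtain ⟨b, l, rfl, hw, hb⟩ := h
    simp only [List.drop_left, Option.some.injEq, List.append_cancel_left_eq, List.cons.injEq]
    exact ⟨fun hy => ⟨b, l, ⟨rfl, rfl⟩, hw, hb, hy.symm⟩, by rintro ⟨b, l, ⟨rfl, rfl⟩, -, -, rfl⟩; rfl⟩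
  · simp only [false_iff]
    rintro ⟨b, l, hx, hw, hb, -⟩
    exact h ⟨b, l, hx, hw, hb⟩

theorem prefixSwap_apply {u v l : List A} {H : A → Prop} {b : A} (hw : IsWord T (b :: l))
    (hb : H b) : prefixSwap T u v H (v ++ b :: l) = some (u ++ b :: l) :=
  prefixSwap_eq_some_iff.mpr ⟨b, l, rfl, hw, hb, rfl⟩

theorem prefixSwap_append_singleton_eq_some_iff {u v y : List A} {H : A → Prop} {c : A} :
    prefixSwap T u v H (v ++ [c]) = some y ↔ H c ∧ y = u ++ [c] := by
  simp only [prefixSwap_eq_some_iff, List.append_cancel_left_eq, List.cons.injEq]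
  constructor
  · rintro ⟨b, l, ⟨rfl, rfl⟩, -, hb, rfl⟩
    exact ⟨hb, rfl⟩
  · rintro ⟨hc, rfl⟩
    exact ⟨c, [], ⟨rfl, rfl⟩, isWord_singleton c, hc, rfl⟩

theorem PMap.ext {f g : PMap A} (h : ∀ x y, f x = some y ↔ g x = some y) : f = g :=
  funext fun x => Option.ext (h x)

theorem pcomp_eq_some_iff {f g : PMap A} {x y : List A} :
    pcomp f g x = some y ↔ ∃ z, g x = some z ∧ f z = some y :=
  Option.bind_eq_some_iff

theorem pinv_eq_some_iff {f : PMap A} (hf : ∀ x x' y, f x = some y → f x' = some y → x = x')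
    {x y : List A} : pinv f y = some x ↔ f x = some y := by
  unfold pinv
  split_ifs with h
  · exact ⟨by rintro ⟨⟩; exact h.choose_spec, fun hx => congrArg some (hf _ _ _ h.choose_spec hx)⟩
  · exact ⟨by rintro ⟨⟩, fun hx => absurd ⟨x, hx⟩ h⟩

theorem pinv_prefixSwap (u v : List A) (H : A → Prop) :
    pinv (prefixSwap T u v H) = prefixSwap T v u H := by
  refine PMap.ext fun y x => ?_
  rw [pinv_eq_some_iff, prefixSwap_eq_some_iff, prefixSwap_eq_some_iff]
  · exact ⟨fun ⟨b, l, hx, hw, hb, hy⟩ => ⟨b, l, hy, hw, hb, hx⟩,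
      fun ⟨b, l, hy, hw, hb, hx⟩ => ⟨b, l, hx, hw, hb, hy⟩⟩
  · intro x x' y hx hx'
    obtain ⟨b, l, rfl, -, -, rfl⟩ := prefixSwap_eq_some_iff.mp hx
    obtain ⟨b', l', rfl, -, -, h⟩ := prefixSwap_eq_some_iff.mp hx'
    rw [List.append_cancel_left h]

theorem theta_eq_prefixSwap (w : List A) : theta T w = prefixSwap T w [] (CanFollow T w) := by
  refine PMap.ext fun x y => ?_
  rw [prefixSwap_eq_some_iff]
  rcases x with _ | ⟨b, l⟩
  · simp [theta, IsWord]
  · simp only [List.nil_append, List.cons.injEq]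
    unfold theta
    constructor
    · intro h
      split_ifs at h with hw
      exact ⟨b, l, ⟨rfl, rfl⟩, hw.1, (isWord_append_cons.mp hw.2).2, (Option.some.inj h).symm⟩
    · rintro ⟨b, l, ⟨rfl, rfl⟩, hw, hb, rfl⟩
      rw [if_pos ⟨hw, isWord_append_cons.mpr ⟨hw, hb⟩⟩]

theorem pzero_eq_prefixSwap : (pzero : PMap A) = prefixSwap T [] [] (fun _ => False) :=
  PMap.ext fun x y => by simp [pzero, prefixSwap_eq_some_iff]

theorem prefixSwap_comp_prefixSwap (u v w : List A) (H K : A → Prop) :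
    pcomp (prefixSwap T u v H) (prefixSwap T v w K) = prefixSwap T u w (fun b => H b ∧ K b) := by
  refine PMap.ext fun x y => ?_
  simp only [pcomp_eq_some_iff, prefixSwap_eq_some_iff]
  constructor
  · rintro ⟨_, ⟨b, l, rfl, hw, hK, rfl⟩, b', l', h, -, hH, rfl⟩
    obtain ⟨rfl, rfl⟩ := List.cons.inj (List.append_cancel_left h)
    exact ⟨b, l, rfl, hw, ⟨hH, hK⟩, rfl⟩
  · rintro ⟨b, l, rfl, hw, ⟨hH, hK⟩, rfl⟩
    exact ⟨_, ⟨b, l, rfl, hw, hK, rfl⟩, b, l, rfl, hw, hH, rfl⟩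

theorem prefixSwap_comp_prefixSwap_self (u v : List A) (H : A → Prop) :
    pcomp (prefixSwap T u v H) (prefixSwap T v u H) = prefixSwap T u u H := by
  rw [prefixSwap_comp_prefixSwap]
  simp only [and_self]

theorem prefixSwap_comp_prefixSwap_append (u v w m : List A) (c : A) (H K : A → Prop) :
    pcomp (prefixSwap T u v H) (prefixSwap T (v ++ c :: m) w K) =
      prefixSwap T (u ++ c :: m) w (fun b => H c ∧ K b ∧ CanFollow T (c :: m) b) := by
  refine PMap.ext fun x y => ?_
  simp only [pcomp_eq_some_iff, prefixSwap_eq_some_iff]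
  constructor
  · rintro ⟨_, ⟨b, l, rfl, hw, hK, rfl⟩, b', l', h, hw', hH, rfl⟩
    rw [List.append_assoc, List.cons_append] at h
    obtain ⟨rfl, rfl⟩ := List.cons.inj (List.append_cancel_left h)
    rw [← List.cons_append] at hw'
    exact ⟨b, l, rfl, hw, ⟨hH, hK, (isWord_append_cons.mp hw').2⟩, by simp⟩
  · rintro ⟨b, l, rfl, hw, ⟨hH, hK, hc⟩, rfl⟩
    have hw' : IsWord T (c :: (m ++ b :: l)) := by
      rw [← List.cons_append]; exact isWord_append_cons.mpr ⟨hw, hc⟩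
    exact ⟨_, ⟨b, l, rfl, hw, hK, rfl⟩, c, m ++ b :: l, by simp, hw', hH, by simp⟩

theorem prefixSwap_append_comp_prefixSwap (u v w m : List A) (c : A) (H K : A → Prop) :
    pcomp (prefixSwap T u (v ++ c :: m) H) (prefixSwap T v w K) =
      prefixSwap T u (w ++ c :: m) (fun b => H b ∧ K c ∧ CanFollow T (c :: m) b) := by
  refine PMap.ext fun x y => ?_
  simp only [pcomp_eq_some_iff, prefixSwap_eq_some_iff]
  constructor
  · rintro ⟨_, ⟨b, l, rfl, hw, hK, rfl⟩, b', l', h, hw', hH, rfl⟩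
    rw [List.append_assoc, List.cons_append] at h
    obtain ⟨rfl, rfl⟩ := List.cons.inj (List.append_cancel_left h).symm
    rw [← List.cons_append] at hw
    exact ⟨b', l', by simp, hw', ⟨hH, hK, (isWord_append_cons.mp hw).2⟩, rfl⟩
  · rintro ⟨b, l, rfl, hw, ⟨hH, hK, hc⟩, rfl⟩
    have hw' : IsWord T (c :: (m ++ b :: l)) := by
      rw [← List.cons_append]; exact isWord_append_cons.mpr ⟨hw, hc⟩
    exact ⟨_, ⟨c, m ++ b :: l, by simp, hw', hK, rfl⟩, b, l, by simp, hw, hH, rfl⟩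

theorem prefixSwap_comp_prefixSwap_eq_pzero {u v v' w : List A} (H K : A → Prop)
    (h₁ : ¬ v <+: v') (h₂ : ¬ v' <+: v) :
    pcomp (prefixSwap T u v H) (prefixSwap T v' w K) = pzero := by
  refine PMap.ext fun x y => ?_
  simp only [pcomp_eq_some_iff, prefixSwap_eq_some_iff, pzero, reduceCtorEq, iff_false]
  rintro ⟨_, ⟨b, l, rfl, -, -, rfl⟩, b', l', h, -⟩
  rcases List.prefix_or_prefix_of_prefix ⟨_, h.symm⟩ (List.prefix_append v' (b :: l)) with h' | h'
  exacts [h₁ h', h₂ h']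

def Admissible (T : A → A → Prop) (u v : List A) (H : A → Prop) : Prop :=
  ∀ b, H b → CanFollow T u b ∧ CanFollow T v b

theorem Admissible.symm {u v : List A} {H : A → Prop} (h : Admissible T u v H) :
    Admissible T v u H :=
  fun b hb => (h b hb).symm

theorem Admissible.exists_pcomp {u v u' v' : List A} {H K : A → Prop} (hH : Admissible T u v H)
    (hK : Admissible T u' v' K) :
    ∃ u'' v'' L, Admissible T u'' v'' L ∧
      pcomp (prefixSwap T u v H) (prefixSwap T u' v' K) = prefixSwap T u'' v'' L := by
  by_cases hvu : v <+: u'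
  · obtain ⟨_ | ⟨c, m⟩, rfl⟩ := hvu
    · rw [List.append_nil, prefixSwap_comp_prefixSwap]
      exact ⟨_, _, _, fun b hb => ⟨(hH b hb.1).1, (hK b hb.2).2⟩, rfl⟩
    · rw [prefixSwap_comp_prefixSwap_append]
      exact ⟨_, _, _, fun b hb => ⟨(hH c hb.1).1.append_cons hb.2.2, (hK b hb.2.1).2⟩, rfl⟩
  by_cases huv : u' <+: v
  · obtain ⟨_ | ⟨c, m⟩, rfl⟩ := huv
    · simp at hvu
    · rw [prefixSwap_append_comp_prefixSwap]
      exact ⟨_, _, _, fun b hb => ⟨(hH b hb.1).1, (hK c hb.2.1).2.append_cons hb.2.2⟩, rfl⟩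
  rw [prefixSwap_comp_prefixSwap_eq_pzero H K hvu huv, pzero_eq_prefixSwap]
  exact ⟨_, _, _, fun _ => False.elim, rfl⟩

theorem Hull.exists_prefixSwap {f : PMap A} (hf : Hull T f) :
    ∃ u v H, Admissible T u v H ∧ f = prefixSwap T u v H := by
  induction hf with
  | gen _ =>
    exact ⟨_, [], _, fun b hb => ⟨hb, List.IsChain.singleton b⟩, theta_eq_prefixSwap _⟩
  | zero => exact ⟨_, _, _, fun _ => False.elim, pzero_eq_prefixSwap⟩
  | comp _ _ ihf ihg =>
    obtain ⟨u, v, H, hH, rfl⟩ := ihf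
    obtain ⟨u', v', K, hK, rfl⟩ := ihg
    exact hH.exists_pcomp hK
  | inv _ ih =>
    obtain ⟨u, v, H, hH, rfl⟩ := ih
    exact ⟨v, u, H, hH.symm, pinv_prefixSwap u v H⟩

theorem prefixSwap_eq_prefixSwap {u v u' v' : List A} {H H' : A → Prop} {b : A} (hb : H b)
    (h : prefixSwap T u v H = prefixSwap T u' v' H') : u = u' ∧ v = v' ∧ H = H' := by
  obtain ⟨b', l', hv, -, hb', hu⟩ :=
    prefixSwap_eq_some_iff.mp (h ▸ prefixSwap_apply (isWord_singleton b) hb)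
  obtain ⟨_, l'', hv', -⟩ :=
    prefixSwap_eq_some_iff.mp (h.symm ▸ prefixSwap_apply (isWord_singleton b') hb')
  -- `v ++ [b]` and `v' ++ [b']` are both shortest words of the common domain
  have hlen := congrArg List.length hv
  have hlen' := congrArg List.length hv'
  simp only [List.length_append, List.length_cons, List.length_nil] at hlen hlen'
  obtain rfl : l' = [] := List.eq_nil_of_length_eq_zero (by omega)
  obtain ⟨rfl, hbb'⟩ := List.append_inj hv (by omega)
  obtain rfl : b = b' := List.singleton_inj.mp hbb'
  obtain rfl := List.append_cancel_right hu
  have key : ∀ c, prefixSwap T u v H (v ++ [c]) = some (u ++ [c]) ↔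
      prefixSwap T u v H' (v ++ [c]) = some (u ++ [c]) := fun c => by rw [h]
  exact ⟨rfl, rfl, funext fun c => propext (by
    simpa only [prefixSwap_append_singleton_eq_some_iff, and_true] using key c)⟩

theorem idemL_eq (a : A) : idemL T a = prefixSwap T [] [] (CanFollow T [a]) := by
  rw [idemL, theta_eq_prefixSwap, pinv_prefixSwap, prefixSwap_comp_prefixSwap_self]

theorem rgIdem_eq (a : A) : rgIdem T a = prefixSwap T [a] [a] (CanFollow T [a]) := by
  rw [rgIdem, theta_eq_prefixSwap, pinv_prefixSwap, prefixSwap_comp_prefixSwap_self]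

theorem idemL_apply_singleton {a c : A} (h : T a c) : idemL T a [c] = some [c] := by
  rw [idemL_eq]
  exact prefixSwap_apply (isWord_singleton c) (canFollow_singleton.mpr h)

theorem rgIdem_apply_pair {a c : A} (h : T a c) : rgIdem T a [a, c] = some [a, c] := by
  rw [rgIdem_eq]
  exact prefixSwap_apply (v := [a]) (isWord_singleton c) (canFollow_singleton.mpr h)

theorem rgIdem_apply_singleton (a c : A) : rgIdem T a [c] = none := by
  rw [rgIdem_eq]
  refine Option.eq_none_iff_forall_ne_some.mpr fun y hy => ?_
  obtain ⟨b, l, h, -⟩ := prefixSwap_eq_some_iff.mp hy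
  simpa using congrArg List.length h

theorem idemL_ne_pzero {a c : A} (h : T a c) : idemL T a ≠ pzero := fun h0 => by
  simpa [h0, pzero] using idemL_apply_singleton h

theorem idemL_ne_rgIdem {a c : A} (h : T a c) (b : A) : idemL T a ≠ rgIdem T b := fun h' => by
  simpa [h', rgIdem_apply_singleton] using idemL_apply_singleton h

theorem idemL_comp_rgIdem {a c : A} (h : T a c) :
    pcomp (idemL T a) (rgIdem T c) = rgIdem T c := by
  have := prefixSwap_comp_prefixSwap_append (T := T) [] [] [c] [] c (CanFollow T [a])
    (CanFollow T [c])
  simp only [List.nil_append] at this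
  rw [idemL_eq, rgIdem_eq, this]
  simp only [canFollow_singleton.mpr h, true_and, and_self]

theorem eq_nil_or_eq_singleton_of_prefixSwap_comp_rgIdem {v : List A} {K : A → Prop} {b x : A}
    (hbx : T b x) (h : pcomp (prefixSwap T v v K) (rgIdem T b) = rgIdem T b) :
    v = [] ∨ v = [b] := by
  have hv := congrFun h [b, x]
  rw [rgIdem_apply_pair hbx, pcomp_eq_some_iff] at hv
  obtain ⟨_, hz, hvz⟩ := hv
  rw [rgIdem_apply_pair hbx, Option.some.injEq] at hz
  subst hz
  obtain ⟨c, l, hbx', -⟩ := prefixSwap_eq_some_iff.mp hvz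
  rcases v with _ | ⟨d, _ | ⟨d', v⟩⟩
  · exact .inl rfl
  · exact .inr (by simp_all)
  · simpa using congrArg List.length hbx'

theorem pinv_comp_eq_idemL {a b c x : A} (hac : T a c) (hbx : T b x) {γ : PMap A}
    (hγ : Hull T γ) (hγa : pcomp γ (pinv γ) = rgIdem T a)
    (hb : pcomp (pcomp (pinv γ) γ) (rgIdem T b) = rgIdem T b)
    (hne : pcomp (pinv γ) γ ≠ rgIdem T b) : pcomp (pinv γ) γ = idemL T a := by
  obtain ⟨u, v, H, hH, rfl⟩ := hγ.exists_prefixSwap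
  rw [pinv_prefixSwap, prefixSwap_comp_prefixSwap_self] at hγa hb hne ⊢
  obtain ⟨rfl, -, rfl⟩ :=
    prefixSwap_eq_prefixSwap (canFollow_singleton.mpr hac) ((rgIdem_eq a).symm.trans hγa.symm)
  rcases eq_nil_or_eq_singleton_of_prefixSwap_comp_rgIdem hbx hb with rfl | rfl
  · exact (idemL_eq a).symm
  refine absurd ?_ hne
  rw [rgIdem_eq, prefixSwap_comp_prefixSwap] at hb
  rw [rgIdem_eq]
  obtain ⟨-, -, hab⟩ := prefixSwap_eq_prefixSwap (canFollow_singleton.mpr hbx) hb.symm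
  congr 1
  exact funext fun y => propext ⟨fun hy => (hH y hy).2, fun hy => ((congrFun hab y).mp hy).1⟩

end PrefixSwap

theorem stmt12_general {A : Type} (T : A → A → Prop) (hT : ∀ a : A, ∃ b : A, T a b)
    (a : A) :
    (∃ γ : PMap A, Hull T γ ∧ pcomp γ (pinv γ) = rgIdem T a ∧
        pcomp (pinv γ) γ = idemL T a) ∧
    idemL T a ≠ pzero ∧
    (∃ b : A, pcomp (idemL T a) (rgIdem T b) = rgIdem T b ∧ idemL T a ≠ rgIdem T b) ∧
    (∀ g : PMap A, Hull T g → pcomp g g = g →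
      (∃ b : A, pcomp g (rgIdem T b) = rgIdem T b) → (∀ b : A, g ≠ rgIdem T b) →
      (∃ γ : PMap A, Hull T γ ∧ pcomp γ (pinv γ) = rgIdem T a ∧ pcomp (pinv γ) γ = g) →
      g = idemL T a) := by
  obtain ⟨c, hac⟩ := hT a
  refine ⟨⟨theta T [a], Hull.gen (isWord_singleton a), rfl, rfl⟩, idemL_ne_pzero hac,
    ⟨c, idemL_comp_rgIdem hac, idemL_ne_rgIdem hac c⟩, ?_⟩
  rintro g - - ⟨b, hgb⟩ hgO ⟨γ, hγ, hγa, rfl⟩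
  obtain ⟨x, hbx⟩ := hT b
  exact pinv_comp_eq_idemL hac hbx hγ hγa hgb (hgO b)

/-- `θ_a θ_a⁻¹ D θ_a⁻¹ θ_a`, with `θ_a⁻¹ θ_a` a nonzero element of `O↑ − O`,
and `θ_a⁻¹ θ_a` is the unique element of `O↑ − O` that is `D`-equivalent to
`θ_a θ_a⁻¹`. -/
theorem stmt12 {A : Type} [Fintype A] (T : A → A → Prop) (hT : ∀ a : A, ∃ b : A, T a b)
    (a : A) :
    (∃ γ : PMap A, Hull T γ ∧ pcomp γ (pinv γ) = rgIdem T a ∧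
        pcomp (pinv γ) γ = idemL T a) ∧
    idemL T a ≠ pzero ∧
    (∃ b : A, pcomp (idemL T a) (rgIdem T b) = rgIdem T b ∧ idemL T a ≠ rgIdem T b) ∧
    (∀ g : PMap A, Hull T g → pcomp g g = g →
      (∃ b : A, pcomp g (rgIdem T b) = rgIdem T b) → (∀ b : A, g ≠ rgIdem T b) →
      (∃ γ : PMap A, Hull T γ ∧ pcomp γ (pinv γ) = rgIdem T a ∧ pcomp (pinv γ) γ = g) →
      g = idemL T a) :=
  stmt12_general T hT a
end
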